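/- For every unstable H*V-A-module N, the unstable A-module Tor_1^{H*V}(F_2, N) (the first derived functor of F_2 ⊗_{H*V} − applied to N) is nilpotent. -/

import Mathlib

/-!
Common preamble: the mod 2 Steenrod algebra `SteenrodAlgebra` (defined by generators
`Sq i` and the Adem relations), the category `U` of unstable modules over it
(`UnstableModule`, `UnstableHom`), the polynomial algebra `H^*V` for `V` an elementary
abelian 2-group of rank `d` (`HVSetup`), the category `H^*V-U` of unstable
`H^*V`-`A`-modules (`HVModule`, `HVHom`), and the various notions used in the paper
(nilpotent, reduced, nil-closed, injectives, injective hulls, Brown-Gitler modules,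
tensor products, direct sums, the functor `Fix`, bar quotients `Ē = F_2 ⊗_{H^*V} E`, …).
-/

noncomputable section

/-- The Adem relations (together with `Sq⁰ = 1`) on the free `ZMod 2`-algebra
generated by symbols `Sq i`, `i : ℕ`. -/
inductive AdemRel : FreeAlgebra (ZMod 2) ℕ → FreeAlgebra (ZMod 2) ℕ → Prop
  | adem (a b : ℕ) (ha : 0 < a) (hab : a < 2 * b) :
      AdemRel (FreeAlgebra.ι (ZMod 2) a * FreeAlgebra.ι (ZMod 2) b)
        (∑ c ∈ Finset.range (a / 2 + 1),
          ((Nat.choose (b - c - 1) (a - 2 * c) : ZMod 2)) •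
            (FreeAlgebra.ι (ZMod 2) (a + b - c) * FreeAlgebra.ι (ZMod 2) c))
  | unit : AdemRel (FreeAlgebra.ι (ZMod 2) 0) 1

/-- The mod 2 Steenrod algebra `A`. -/
abbrev SteenrodAlgebra : Type := RingQuot AdemRel

/-- The Steenrod squares `Sq i ∈ A`. -/
def Sq (i : ℕ) : SteenrodAlgebra :=
  RingQuot.mkAlgHom (ZMod 2) AdemRel (FreeAlgebra.ι (ZMod 2) i)

/-- An unstable module over the mod 2 Steenrod algebra: a graded `ZMod 2`-vector space
with a compatible `A`-action such that `Sq i` raises degrees by `i` and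
`Sq i x = 0` whenever `i > |x|` (the instability condition).  Objects of `U`. -/
structure UnstableModule : Type 1 where
  carrier : Type
  [acg : AddCommGroup carrier]
  [modA : Module SteenrodAlgebra carrier]
  [modF : Module (ZMod 2) carrier]
  [tower : IsScalarTower (ZMod 2) SteenrodAlgebra carrier]
  grading : ℕ → Submodule (ZMod 2) carrier
  isInternal : DirectSum.IsInternal grading
  sq_mem : ∀ (i n : ℕ) (x : carrier), x ∈ grading n → Sq i • x ∈ grading (n + i)
  instability : ∀ (i n : ℕ) (x : carrier), x ∈ grading n → n < i → Sq i • x = 0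

attribute [instance] UnstableModule.acg UnstableModule.modA UnstableModule.modF
  UnstableModule.tower

/-- Morphisms of `U`: `A`-linear maps of degree zero. -/
structure UnstableHom (M N : UnstableModule) where
  toFun : M.carrier →ₗ[SteenrodAlgebra] N.carrier
  map_grading : ∀ (n : ℕ) (x : M.carrier), x ∈ M.grading n → toFun x ∈ N.grading n

/-- Composition of morphisms of `U`. -/
def UnstableHom.comp {M N P : UnstableModule} (g : UnstableHom N P) (f : UnstableHom M N) :
    UnstableHom M P :=
  ⟨g.toFun.comp f.toFun, fun n x hx => g.map_grading n _ (f.map_grading n x hx)⟩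

/-- The identity morphism of `U`. -/
def UnstableHom.id (M : UnstableModule) : UnstableHom M M :=
  ⟨LinearMap.id, fun _ _ h => h⟩

/-- `M ≅ N` in the category `U`. -/
def UIso (M N : UnstableModule) : Prop :=
  ∃ (f : UnstableHom M N) (g : UnstableHom N M),
    (∀ x, g.toFun (f.toFun x) = x) ∧ ∀ y, f.toFun (g.toFun y) = y

/-- `sq0Iter M k n x` is the `k`-fold iterate of `Sq₀ : x ↦ Sq^{|x|} x` on an element
`x` of degree `n` (whose `j`-th iterate has degree `2^j * n`). -/
def sq0Iter (M : UnstableModule) : ℕ → ℕ → M.carrier → M.carrier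
  | 0, _, x => x
  | k + 1, n, x => Sq (2 ^ k * n) • sq0Iter M k n x

/-- An unstable module is nilpotent if every (homogeneous) element is killed by some
iterate of `Sq₀`. -/
def IsNilpotentU (M : UnstableModule) : Prop :=
  ∀ (n : ℕ) (x : M.carrier), x ∈ M.grading n → ∃ k, sq0Iter M k n x = 0

/-- An unstable module is reduced if `Sq₀ : x ↦ Sq^{|x|} x` is injective. -/
def IsReducedU (M : UnstableModule) : Prop :=
  ∀ (n : ℕ) (x : M.carrier), x ∈ M.grading n → Sq n • x = 0 → x = 0

/-- An unstable module is nil-closed if it is reduced and `Ker Sq₁ = Im Sq₀`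
(on homogeneous elements, `Sq₁ x = Sq^{|x|-1} x` and `Sq₀ y = Sq^{|y|} y`). -/
def IsNilClosedU (M : UnstableModule) : Prop :=
  IsReducedU M ∧
  ∀ (n : ℕ) (x : M.carrier), x ∈ M.grading n →
    (Sq (n - 1) • x = 0 ↔ ∃ (m : ℕ) (y : M.carrier), y ∈ M.grading m ∧ Sq m • y = x)

/-- A graded submodule: an `A`-submodule spanned by its homogeneous elements. -/
def IsGradedSub (M : UnstableModule) (p : Submodule SteenrodAlgebra M.carrier) : Prop :=
  ∀ x ∈ p, x ∈ Submodule.span (ZMod 2)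
    ((p : Set M.carrier) ∩ ⋃ n, ((M.grading n : Submodule (ZMod 2) M.carrier) : Set M.carrier))

/-- Injective objects of the category `U` (lifting property against monomorphisms). -/
def IsInjectiveU (I : UnstableModule) : Prop :=
  ∀ (M N : UnstableModule) (f : UnstableHom M N), Function.Injective f.toFun →
    ∀ g : UnstableHom M I, ∃ h : UnstableHom N I, ∀ x, h.toFun (f.toFun x) = g.toFun x

/-- `i : M ↪ E` exhibits `E` as the injective hull of `M` in `U`: `E` is injective,
`i` is injective, and the extension is essential (every non-trivial graded
`A`-submodule of `E` meets the image of `M` non-trivially). -/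
def IsInjectiveHullU (M E : UnstableModule) (i : UnstableHom M E) : Prop :=
  IsInjectiveU E ∧ Function.Injective i.toFun ∧
  ∀ p : Submodule SteenrodAlgebra E.carrier, IsGradedSub E p → p ≠ ⊥ →
    ∃ x, x ≠ 0 ∧ x ∈ p ∧ x ∈ Set.range i.toFun

/-- The Brown-Gitler module `J(n)`: it represents the functor `M ↦ (Mⁿ)^∨`, i.e.
there is a bijection `Hom_U(M, J(n)) ≅ Hom_{F_2}(Mⁿ, F_2)`, natural in `M`. -/
def IsBrownGitler (J : UnstableModule) (n : ℕ) : Prop :=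
  ∃ Φ : ∀ M : UnstableModule, UnstableHom M J → (↥(M.grading n) →ₗ[ZMod 2] ZMod 2),
    (∀ M, Function.Bijective (Φ M)) ∧
    ∀ (M M' : UnstableModule) (f : UnstableHom M' M) (g : UnstableHom M J)
      (x : ↥(M'.grading n)),
      Φ M' (g.comp f) x = Φ M g ⟨f.toFun x, f.map_grading n x x.2⟩

/-- `T` realizes the tensor product `M ⊗_{F_2} N` in `U` (with the Cartan formula
giving the `A`-action and the total grading). -/
def IsTensorOf (M N T : UnstableModule) : Prop :=
  ∃ β : M.carrier →ₗ[ZMod 2] N.carrier →ₗ[ZMod 2] T.carrier,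
    (∀ (m n : ℕ) (x : M.carrier) (y : N.carrier), x ∈ M.grading m → y ∈ N.grading n →
      β x y ∈ T.grading (m + n)) ∧
    (∀ (k : ℕ) (x : M.carrier) (y : N.carrier),
      Sq k • β x y = ∑ i ∈ Finset.range (k + 1), β (Sq i • x) (Sq (k - i) • y)) ∧
    Function.Bijective (TensorProduct.lift β)

/-- `I` is the direct sum (coproduct in `U`) of the family `F`. -/
def IsDirectSumOf (I : UnstableModule) {ι : Type} (F : ι → UnstableModule) : Prop :=
  letI := Classical.decEq ι
  ∃ j : ∀ i, UnstableHom (F i) I,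
    Function.Bijective
      (DirectSum.toModule SteenrodAlgebra ι I.carrier fun i => (j i).toFun)

/-- An indecomposable (non-trivial) object of `U`: its only idempotent endomorphisms
are `0` and the identity. -/
def IndecomposableU (L : UnstableModule) : Prop :=
  (∃ x : L.carrier, x ≠ 0) ∧
  ∀ e : UnstableHom L L, (∀ x, e.toFun (e.toFun x) = e.toFun x) →
    (∀ x, e.toFun x = 0) ∨ (∀ x, e.toFun x = x)

/-- `H^*V` for `V` an elementary abelian 2-group of rank `d`: a polynomial algebra
`F_2[t_1, …, t_d]` on generators of degree 1, with its unstable `A`-algebra structure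
(`Sq¹ t = t²` and the Cartan formula).  `cV` is the top Dickson invariant
`∏_{0 ≠ u ∈ H¹V} u`. -/
structure HVSetup (d : ℕ) : Type 1 where
  H : Type
  [ring : CommRing H]
  [modA : Module SteenrodAlgebra H]
  [modF : Module (ZMod 2) H]
  [tower : IsScalarTower (ZMod 2) SteenrodAlgebra H]
  grading : ℕ → Submodule (ZMod 2) H
  isInternal : DirectSum.IsInternal grading
  sq_mem : ∀ (i n : ℕ) (x : H), x ∈ grading n → Sq i • x ∈ grading (n + i)
  instability : ∀ (i n : ℕ) (x : H), x ∈ grading n → n < i → Sq i • x = 0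
  one_mem : (1 : H) ∈ grading 0
  mul_mem : ∀ (m n : ℕ) (x y : H), x ∈ grading m → y ∈ grading n → x * y ∈ grading (m + n)
  cartanH : ∀ (k : ℕ) (x y : H),
    Sq k • (x * y) = ∑ i ∈ Finset.range (k + 1), (Sq i • x) * (Sq (k - i) • y)
  gens : Fin d → H
  gens_deg : ∀ i, gens i ∈ grading 1
  sq_one_gen : ∀ i, Sq 1 • gens i = gens i * gens i
  monomial_indep : LinearIndependent (ZMod 2) (fun e : Fin d → ℕ => ∏ i, gens i ^ e i)
  monomial_span : ⊤ ≤ Submodule.span (ZMod 2) (Set.range fun e : Fin d → ℕ => ∏ i, gens i ^ e i)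
  cV : H
  cV_spec : ∃ s : Finset H, (∀ u, u ∈ s ↔ (u ∈ grading 1 ∧ u ≠ 0)) ∧ cV = ∏ u ∈ s, u

attribute [instance] HVSetup.ring HVSetup.modA HVSetup.modF HVSetup.tower

/-- `H^*V` as an object of `U`. -/
@[reducible] def HVSetup.toUnstable {d : ℕ} (V : HVSetup d) : UnstableModule where
  carrier := V.H
  grading := V.grading
  isInternal := V.isInternal
  sq_mem := V.sq_mem
  instability := V.instability

/-- A representative of an indecomposable direct factor of some `H^*((Z/2)^m)`
(an element of the set `𝓛` of the classification theorems). -/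
def IsIndecInjFactor (L : UnstableModule) : Prop :=
  IndecomposableU L ∧
  ∃ (m : ℕ) (V : HVSetup m) (j : UnstableHom L V.toUnstable)
    (r : UnstableHom V.toUnstable L), ∀ x, r.toFun (j.toFun x) = x

/-- An unstable `H^*V`-`A`-module: an object `E` of `U` together with a compatible
`H^*V`-module structure satisfying the Cartan formula, and the data of the unstable
`A`-module `Ē = F_2 ⊗_{H^*V} E = E / (H̃^*V · E)` with the projection `barπ : E → Ē`. -/
structure HVModule {d : ℕ} (V : HVSetup d) : Type 1 where
  E : UnstableModule
  [modH : Module V.H E.carrier]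
  smul_grading : ∀ (m n : ℕ) (h : V.H) (x : E.carrier),
    h ∈ V.grading m → x ∈ E.grading n → h • x ∈ E.grading (m + n)
  cartan : ∀ (k : ℕ) (h : V.H) (x : E.carrier),
    Sq k • (h • x) = ∑ i ∈ Finset.range (k + 1), (Sq i • h) • (Sq (k - i) • x)
  bar : UnstableModule
  barπ : UnstableHom E bar
  barπ_surj : Function.Surjective barπ.toFun
  barπ_ker : ∀ y : E.carrier, barπ.toFun y = 0 ↔
    y ∈ Submodule.span (ZMod 2)
      {z : E.carrier | ∃ (m : ℕ) (h : V.H) (x : E.carrier),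
        1 ≤ m ∧ h ∈ V.grading m ∧ z = h • x}

attribute [instance] HVModule.modH

/-- Morphisms of `H^*V-U`: `H^*V`-linear and `A`-linear maps of degree zero. -/
structure HVHom {d : ℕ} (V : HVSetup d) (M N : HVModule V) extends UnstableHom M.E N.E where
  map_hsmul : ∀ (h : V.H) (x : M.E.carrier), toFun (h • x) = h • toFun x

/-- `M ≅ N` in the category `H^*V-U`. -/
def HVIso {d : ℕ} {V : HVSetup d} (M N : HVModule V) : Prop :=
  ∃ (f : HVHom V M N) (g : HVHom V N M),
    (∀ x, g.toFun (f.toFun x) = x) ∧ ∀ y, f.toFun (g.toFun y) = y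

/-- `ι : P → T` realizes `T` as `H^*V ⊗ P`, via the universal property: every `A`-linear
map from `P` to an unstable `H^*V`-`A`-module extends uniquely to an `H^*V`-`A`-linear
map from `T`. -/
def IsHVTensor {d : ℕ} (V : HVSetup d) (P : UnstableModule) (T : HVModule V)
    (ι : UnstableHom P T.E) : Prop :=
  ∀ (N : HVModule V) (f : UnstableHom P N.E),
    ∃ g : HVHom V T N, (∀ x, g.toFun (ι.toFun x) = f.toFun x) ∧
      ∀ g' : HVHom V T N, (∀ x, g'.toFun (ι.toFun x) = f.toFun x) →
        ∀ y, g'.toFun y = g.toFun y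

/-- Injective objects of the category `H^*V-U`. -/
def IsInjectiveHVU {d : ℕ} {V : HVSetup d} (I : HVModule V) : Prop :=
  ∀ (M N : HVModule V) (f : HVHom V M N), Function.Injective f.toFun →
    ∀ g : HVHom V M I, ∃ h : HVHom V N I, ∀ x, h.toFun (f.toFun x) = g.toFun x

/-- `i : M ↪ E` exhibits `E` as the injective hull of `M` in `H^*V-U`. -/
def IsInjectiveHullHVU {d : ℕ} {V : HVSetup d} (M E : HVModule V) (i : HVHom V M E) : Prop :=
  IsInjectiveHVU E ∧ Function.Injective i.toFun ∧
  ∀ p : Submodule SteenrodAlgebra E.E.carrier, IsGradedSub E.E p →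
    (∀ (h : V.H) (x : E.E.carrier), x ∈ p → h • x ∈ p) → p ≠ ⊥ →
    ∃ x, x ≠ 0 ∧ x ∈ p ∧ x ∈ Set.range i.toFun

/-- `I` is the direct sum (in `H^*V-U`) of the family `F`. -/
def IsHVDirectSumOf {d : ℕ} {V : HVSetup d} (I : HVModule V) {ι : Type}
    (F : ι → HVModule V) : Prop :=
  letI := Classical.decEq ι
  ∃ j : ∀ i, HVHom V (F i) I,
    Function.Bijective
      (DirectSum.toModule SteenrodAlgebra ι I.E.carrier fun i => (j i).toFun)

/-- `T` realizes `M ⊗_{F_2} L` in `H^*V-U` (with `H^*V` acting on the first factor). -/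
def IsHVTensorWithU {d : ℕ} {V : HVSetup d} (M : HVModule V) (L : UnstableModule)
    (T : HVModule V) : Prop :=
  ∃ β : M.E.carrier →ₗ[ZMod 2] L.carrier →ₗ[ZMod 2] T.E.carrier,
    (∀ (m n : ℕ) (x : M.E.carrier) (y : L.carrier),
      x ∈ M.E.grading m → y ∈ L.grading n → β x y ∈ T.E.grading (m + n)) ∧
    (∀ (k : ℕ) (x : M.E.carrier) (y : L.carrier),
      Sq k • β x y = ∑ i ∈ Finset.range (k + 1), β (Sq i • x) (Sq (k - i) • y)) ∧
    (∀ (h : V.H) (x : M.E.carrier) (y : L.carrier), β (h • x) y = h • β x y) ∧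
    Function.Bijective (TensorProduct.lift β)

/-- A morphism of setups `H^*(V/W) → H^*V` induced by a projection `V → V/W` onto a
quotient by a subgroup `W`: an injective map of unstable `A`-algebras. -/
structure SetupMap {e d : ℕ} (U : HVSetup e) (V : HVSetup d) where
  toHom : UnstableHom U.toUnstable V.toUnstable
  map_one : toHom.toFun 1 = 1
  map_mul : ∀ x y, toHom.toFun (x * y) = toHom.toFun x * toHom.toFun y
  inj : Function.Injective toHom.toFun

/-- `ι : M → T` realizes `T` as the base change `H^*V ⊗_{H^*(V/W)} M` along
`ρ : H^*(V/W) → H^*V`, via the universal property of extension of scalars. -/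
def IsBaseChangeOf {e d : ℕ} {U : HVSetup e} {V : HVSetup d} (ρ : SetupMap U V)
    (M : HVModule U) (T : HVModule V) (ι : UnstableHom M.E T.E) : Prop :=
  (∀ (h : U.H) (x : M.E.carrier), ι.toFun (h • x) = ρ.toHom.toFun h • ι.toFun x) ∧
  ∀ (N : HVModule V) (f : UnstableHom M.E N.E),
    (∀ (h : U.H) (x : M.E.carrier), f.toFun (h • x) = ρ.toHom.toFun h • f.toFun x) →
    ∃ g : HVHom V T N, (∀ x, g.toFun (ι.toFun x) = f.toFun x) ∧
      ∀ g' : HVHom V T N, (∀ x, g'.toFun (ι.toFun x) = f.toFun x) →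
        ∀ y, g'.toFun y = g.toFun y

/-- The Brown-Gitler object `J_V(n)` of `H^*V-U`: it represents `M ↦ (Mⁿ)^∨` on
`H^*V-U`. -/
def IsHVBrownGitler {e : ℕ} (U : HVSetup e) (J : HVModule U) (n : ℕ) : Prop :=
  ∃ Φ : ∀ M : HVModule U, HVHom U M J → (↥(M.E.grading n) →ₗ[ZMod 2] ZMod 2),
    (∀ M, Function.Bijective (Φ M)) ∧
    ∀ (M M' : HVModule U) (f : HVHom U M' M) (g : HVHom U M J)
      (x : ↥(M'.E.grading n)),
      Φ M' ⟨g.toUnstableHom.comp f.toUnstableHom,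
        fun h y => by simp [UnstableHom.comp, f.map_hsmul, g.map_hsmul]⟩ x =
      Φ M g ⟨f.toFun x, f.map_grading n x x.2⟩

/-- The data of `Fix_V N` together with its couniversal property: `Fix_V` is left
adjoint to `H^*V ⊗ -`, and `η : N → H^*V ⊗ Fix_V N` is the unit (the adjoint of the
identity of `Fix_V N`). -/
structure FixData {d : ℕ} (V : HVSetup d) (N : HVModule V) where
  F : UnstableModule
  T : HVModule V
  ι : UnstableHom F T.E
  tensor : IsHVTensor V F T ι
  η : HVHom V N T
  univ : ∀ (P : UnstableModule) (T' : HVModule V) (ι' : UnstableHom P T'.E),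
    IsHVTensor V P T' ι' → ∀ f : HVHom V N T',
    ∃ φ : UnstableHom F P,
      (∀ g : HVHom V T T', (∀ x, g.toFun (ι.toFun x) = ι'.toFun (φ.toFun x)) →
        ∀ y, g.toFun (η.toFun y) = f.toFun y) ∧
      ∀ φ' : UnstableHom F P,
        (∀ g : HVHom V T T', (∀ x, g.toFun (ι.toFun x) = ι'.toFun (φ'.toFun x)) →
          ∀ y, g.toFun (η.toFun y) = f.toFun y) →
        ∀ z, φ'.toFun z = φ.toFun z

/-- `0 → M → I₀ → I₁` is the beginning of a minimal injective resolution in `U`: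
`I₀` is the injective hull of `M` and `I₁` is the injective hull of `I₀/M`. -/
def IsMinResStartU (M I0 I1 : UnstableModule) (e0 : UnstableHom M I0)
    (a : UnstableHom I0 I1) : Prop :=
  IsInjectiveHullU M I0 e0 ∧ IsInjectiveU I1 ∧
  (∀ x, a.toFun x = 0 ↔ x ∈ Set.range e0.toFun) ∧
  ∀ (C : UnstableModule) (q : UnstableHom I0 C), Function.Surjective q.toFun →
    (∀ x, q.toFun x = 0 ↔ x ∈ Set.range e0.toFun) →
    ∀ a' : UnstableHom C I1, (∀ x, a'.toFun (q.toFun x) = a.toFun x) →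
      IsInjectiveHullU C I1 a'

/-- `0 → M → T₀ → T₁` is the beginning of a minimal injective resolution in `H^*V-U`. -/
def IsMinResStartHV {d : ℕ} {V : HVSetup d} (M T0 T1 : HVModule V)
    (e0 : HVHom V M T0) (a : HVHom V T0 T1) : Prop :=
  IsInjectiveHullHVU M T0 e0 ∧ IsInjectiveHVU T1 ∧
  (∀ x, a.toFun x = 0 ↔ x ∈ Set.range e0.toFun) ∧
  ∀ (C : HVModule V) (q : HVHom V T0 C), Function.Surjective q.toFun →
    (∀ x, q.toFun x = 0 ↔ x ∈ Set.range e0.toFun) →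
    ∀ a' : HVHom V C T1, (∀ x, a'.toFun (q.toFun x) = a.toFun x) →
      IsInjectiveHullHVU C T1 a'

/-- `M` is (isomorphic to) the `n`-fold suspension `Σⁿ F_2`: one-dimensional,
concentrated in degree `n`. -/
def IsSphereLike (M : UnstableModule) (n : ℕ) : Prop :=
  (∀ (m : ℕ) (x : M.carrier), x ∈ M.grading m → m ≠ n → x = 0) ∧
  ∃ x, x ∈ M.grading n ∧ x ≠ 0 ∧ ∀ y ∈ M.grading n, y = 0 ∨ y = x

/-- `SM` realizes the suspension `Σ M` in `U`. -/
def IsSuspensionU (M SM : UnstableModule) : Prop :=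
  ∃ s : M.carrier →+ SM.carrier, Function.Bijective s ∧
    (∀ (n : ℕ) (x : M.carrier), x ∈ M.grading n → s x ∈ SM.grading (n + 1)) ∧
    ∀ (k : ℕ) (x : M.carrier), s (Sq k • x) = Sq k • s x

/-- `SM` realizes the suspension `Σ M` in `H^*V-U`. -/
def IsSuspensionHV {d : ℕ} {V : HVSetup d} (M SM : HVModule V) : Prop :=
  ∃ s : M.E.carrier →+ SM.E.carrier, Function.Bijective s ∧
    (∀ (n : ℕ) (x : M.E.carrier), x ∈ M.E.grading n → s x ∈ SM.E.grading (n + 1)) ∧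
    (∀ (k : ℕ) (x : M.E.carrier), s (Sq k • x) = Sq k • s x) ∧
    ∀ (h : V.H) (x : M.E.carrier), s (h • x) = h • s x

/-- `M` realizes `Σ^dd (u · H^*V)`, the `dd`-fold suspension of the principal ideal
generated by a homogeneous element `u` of degree `du` (an unstable `H^*V`-`A`-submodule
of `H^*V` since `u` is a product of linear forms): the witness `f` sends `h` to
`Σ^dd (u·h)`. -/
def IsSuspensionOfPrincipalIdeal {d : ℕ} (V : HVSetup d) (M : HVModule V)
    (dd du : ℕ) (u : V.H) : Prop :=
  u ∈ V.grading du ∧ u ≠ 0 ∧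
  ∃ f : V.H →+ M.E.carrier,
    Function.Bijective f ∧
    (∀ (h h' : V.H), f (h' * h) = h' • f h) ∧
    (∀ (m : ℕ) (h : V.H), h ∈ V.grading m → f h ∈ M.E.grading (dd + du + m)) ∧
    ∀ (k : ℕ) (h h' : V.H), Sq k • (u * h) = u * h' → Sq k • f h = f h'

/-- A `V`-CW-complex, recorded through its mod 2 cohomology `H^*X`, its mod 2
equivariant cohomology `H^*_V X` (the cohomology of the Borel construction, an
unstable `H^*V`-`A`-module) and the restriction map `H^*_V X → H^*X` to the fibre of
`X → X_{hV} → BV`.  The field `collapse_of_free` records the classical topological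
fact that if `H^*_V X` is `H^*V`-free then the Serre spectral sequence collapses, so
that the restriction map identifies `F_2 ⊗_{H^*V} H^*_V X` with `H^*X`. -/
structure VCWComplex {d : ℕ} (V : HVSetup d) : Type 1 where
  cohomology : UnstableModule
  equivariantCohomology : HVModule V
  restriction : UnstableHom equivariantCohomology.E cohomology
  restriction_hsmul : ∀ (m : ℕ) (h : V.H) (x : equivariantCohomology.E.carrier),
    1 ≤ m → h ∈ V.grading m → restriction.toFun (h • x) = 0
  collapse_of_free : Module.Free V.H equivariantCohomology.E.carrier →
    Function.Surjective restriction.toFun ∧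
    ∀ y, restriction.toFun y = 0 ↔ equivariantCohomology.barπ.toFun y = 0

end

/-!
Write `Sq₀` for `x ↦ Sq^{|x|} x` and `P_r ⊆ F` for the additive span of the `t_l • F`, `l < r`,
so that `P_d = H̃^*V · F`. A homogeneous class of `Tor₁` lifts to `y ∈ K` with `i y ∈ P_d`, and
it suffices to find `k` with `Sq₀ᵏ y ∈ H̃^*V · K`. Induct on `r`: write `i y = t v + w` with
`t = t_r`, `|v| = |y| - 1` and `w ∈ P_r`. The Cartan formula
`Sq^{j+1}(t v) = t Sq^{j+1} v + t² Sq^j v` shows inductively that `t Sq^j v ≡ i z_j (mod P_r)`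
for homogeneous `z_j ∈ K`, and since `Sq^{|y|} v = 0` by instability, `y' = Sq₀ y - t z_{|y|-1}`
satisfies `i y' ∈ P_r`. As `Sq₀ᵏ (t z) = Sq₀ᵏ t · Sq₀ᵏ z` lies in `H̃^*V · K`, the induction
hypothesis for `y'` finishes.
-/

open DirectSum

lemma Sq_zero : Sq 0 = 1 := by
  simpa [Sq] using RingQuot.mkAlgHom_rel (ZMod 2) AdemRel.unit

namespace UnstableModule

variable (M : UnstableModule)

noncomputable instance : Decomposition M.grading := M.isInternal.chooseDecomposition

noncomputable def proj (n : ℕ) : M.carrier →+ M.carrier :=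
  AddMonoidHom.mk' (fun x => (decompose M.grading x n : M.carrier))
    (fun x y => by rw [decompose_add, DirectSum.add_apply, Submodule.coe_add])

variable {M}

lemma proj_mem (n : ℕ) (x : M.carrier) : M.proj n x ∈ M.grading n :=
  (decompose M.grading x n).2

lemma proj_of_mem {m : ℕ} {x : M.carrier} (hx : x ∈ M.grading m) (n : ℕ) :
    M.proj n x = if m = n then x else 0 := by
  split_ifs with h
  · subst h
    exact decompose_of_mem_same M.grading hx
  · exact decompose_of_mem_ne M.grading hx h

lemma proj_of_mem_same {n : ℕ} {x : M.carrier} (hx : x ∈ M.grading n) : M.proj n x = x := by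
  rw [proj_of_mem hx, if_pos rfl]

end UnstableModule

lemma UnstableHom.map_proj {M N : UnstableModule} (f : UnstableHom M N) (n : ℕ)
    (x : M.carrier) : f.toFun (M.proj n x) = N.proj n (f.toFun x) := by
  induction x using Decomposition.inductionOn M.grading with
  | zero => simp only [map_zero]
  | homogeneous x =>
    rw [UnstableModule.proj_of_mem x.2, UnstableModule.proj_of_mem (f.map_grading _ _ x.2)]
    split_ifs <;> simp only [map_zero]
  | add x y hx hy => simp only [map_add, hx, hy]

lemma sq0Iter_succ' (M : UnstableModule) (k n : ℕ) (x : M.carrier) :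
    sq0Iter M (k + 1) n x = sq0Iter M k (2 * n) (Sq n • x) := by
  induction k with
  | zero => simp [sq0Iter]
  | succ k ih => rw [sq0Iter, ih, sq0Iter, pow_succ, mul_assoc]

lemma sq0Iter_add (M : UnstableModule) (k n : ℕ) (x y : M.carrier) :
    sq0Iter M k n (x + y) = sq0Iter M k n x + sq0Iter M k n y := by
  induction k with
  | zero => rfl
  | succ k ih => simp only [sq0Iter, ih, smul_add]

lemma sq0Iter_mem {M : UnstableModule} (k : ℕ) {n : ℕ} {x : M.carrier} (hx : x ∈ M.grading n) :
    sq0Iter M k n x ∈ M.grading (2 ^ k * n) := by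
  induction k with
  | zero => simpa [sq0Iter] using hx
  | succ k ih =>
    rw [pow_succ, mul_comm _ 2, mul_assoc, two_mul]
    exact M.sq_mem _ _ _ ih

lemma UnstableHom.map_sq0Iter {M N : UnstableModule} (f : UnstableHom M N) (k n : ℕ)
    (x : M.carrier) : f.toFun (sq0Iter M k n x) = sq0Iter N k n (f.toFun x) := by
  induction k with
  | zero => rfl
  | succ k ih => simp only [sq0Iter, map_smul, ih]

namespace HVSetup

variable {d : ℕ} (V : HVSetup d)

lemma gens_pow_mem (l : Fin d) (q : ℕ) : V.gens l ^ q ∈ V.grading q := by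
  induction q with
  | zero => simpa using V.one_mem
  | succ q ih => simpa [pow_succ] using V.mul_mem q 1 _ _ ih (V.gens_deg l)

lemma prod_gens_pow_mem (e : Fin d → ℕ) (s : Finset (Fin d)) :
    ∏ l ∈ s, V.gens l ^ e l ∈ V.grading (∑ l ∈ s, e l) := by
  classical
  induction s using Finset.induction_on with
  | empty => simpa using V.one_mem
  | insert l s hl ih =>
    rw [Finset.prod_insert hl, Finset.sum_insert hl]
    exact V.mul_mem _ _ _ _ (V.gens_pow_mem l _) ih

lemma mem_span_gens_of_mem_grading {m : ℕ} (hm : 1 ≤ m) {h : V.H} (hh : h ∈ V.grading m) :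
    h ∈ Ideal.span (Set.range V.gens) := by
  have proj_mem_ideal :
      ∀ x ∈ Submodule.span (ZMod 2) (Set.range fun e : Fin d → ℕ => ∏ l, V.gens l ^ e l),
      V.toUnstable.proj m x ∈ Ideal.span (Set.range V.gens) := by
    intro x hx
    induction hx using Submodule.span_induction with
    | mem x hx =>
      obtain ⟨e, rfl⟩ := hx
      rw [UnstableModule.proj_of_mem (V.prod_gens_pow_mem e Finset.univ)]
      split_ifs with he
      · obtain ⟨l, -, hl⟩ := Finset.exists_ne_zero_of_sum_ne_zero (s := Finset.univ) (f := e)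
          (by omega)
        exact Ideal.prod_mem _ (Finset.mem_univ l)
          (Ideal.pow_mem_of_mem _ (Ideal.subset_span (Set.mem_range_self l)) _
            (Nat.pos_of_ne_zero hl))
      · exact zero_mem _
    | zero => simp only [map_zero, zero_mem]
    | add x y _ _ hx hy => simpa only [map_add] using add_mem hx hy
    | smul c x _ hx => simpa only [ZMod.map_smul] using ZMod.smul_mem hx c
  simpa only [UnstableModule.proj_of_mem_same (M := V.toUnstable) hh] using
    proj_mem_ideal h (V.monomial_span trivial)

end HVSetup

namespace HVModule

variable {d : ℕ} {V : HVSetup d} (M : HVModule V)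

lemma sq_add_smul {a b : ℕ} {h : V.H} {z : M.E.carrier} (hh : h ∈ V.grading a)
    (hz : z ∈ M.E.grading b) : Sq (a + b) • (h • z) = (Sq a • h) • (Sq b • z) := by
  rw [M.cartan, Finset.sum_eq_single_of_mem a (by simp), Nat.add_sub_cancel_left]
  intro j _ hja
  rcases lt_or_gt_of_ne hja with hlt | hgt
  · rw [M.E.instability _ b z hz (by omega), smul_zero]
  · rw [V.instability j a h hh hgt, zero_smul]

lemma sq0Iter_smul {a b : ℕ} {h : V.H} {z : M.E.carrier} (hh : h ∈ V.grading a)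
    (hz : z ∈ M.E.grading b) (k : ℕ) :
    sq0Iter M.E k (a + b) (h • z) = sq0Iter V.toUnstable k a h • sq0Iter M.E k b z := by
  induction k with
  | zero => rfl
  | succ k ih =>
    simp only [sq0Iter]
    rw [ih, Nat.mul_add, M.sq_add_smul (sq0Iter_mem (M := V.toUnstable) k hh) (sq0Iter_mem k hz)]

lemma sq_succ_gens_smul (l : Fin d) (j : ℕ) (v : M.E.carrier) :
    Sq (j + 1) • (V.gens l • v)
      = V.gens l • (Sq (j + 1) • v) + V.gens l • (V.gens l • (Sq j • v)) := by
  rw [M.cartan, Finset.sum_range_succ', Finset.sum_range_succ',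
    Finset.sum_eq_zero fun i _ => by
      rw [V.instability (i + 1 + 1) 1 _ (V.gens_deg l) (by omega), zero_smul],
    zero_add, V.sq_one_gen l, Sq_zero, one_smul, mul_smul, Nat.add_sub_cancel, Nat.sub_zero,
    add_comm]

lemma proj_smul_of_mem {a : ℕ} {h : V.H} (hh : h ∈ V.grading a) (n : ℕ) (z : M.E.carrier) :
    M.E.proj (a + n) (h • z) = h • M.E.proj n z := by
  induction z using Decomposition.inductionOn M.E.grading with
  | zero => simp only [smul_zero, map_zero]
  | homogeneous z =>
    rw [UnstableModule.proj_of_mem (M.smul_grading _ _ _ _ hh z.2),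
      UnstableModule.proj_of_mem z.2]
    split_ifs <;> first | omega | simp only [smul_zero]
  | add x y hx hy => simp only [smul_add, map_add, hx, hy]

lemma proj_smul_of_lt {a n : ℕ} (hn : n < a) {h : V.H} (hh : h ∈ V.grading a)
    (z : M.E.carrier) : M.E.proj n (h • z) = 0 := by
  induction z using Decomposition.inductionOn M.E.grading with
  | zero => simp only [smul_zero, map_zero]
  | homogeneous z =>
    rw [UnstableModule.proj_of_mem (M.smul_grading _ _ _ _ hh z.2), if_neg (by omega)]
  | add x y hx hy => simp only [smul_add, map_add, hx, hy, add_zero]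

lemma barπ_smul_eq_zero {m : ℕ} (hm : 1 ≤ m) {h : V.H} (hh : h ∈ V.grading m)
    (z : M.E.carrier) : M.barπ.toFun (h • z) = 0 :=
  (M.barπ_ker _).mpr (Submodule.subset_span ⟨m, h, z, hm, hh, rfl⟩)

lemma barπ_sq0Iter_smul_eq_zero {a b : ℕ} (ha : 1 ≤ a) {h : V.H} (hh : h ∈ V.grading a)
    {z : M.E.carrier} (hz : z ∈ M.E.grading b) (k : ℕ) :
    M.barπ.toFun (sq0Iter M.E k (a + b) (h • z)) = 0 := by
  rw [M.sq0Iter_smul hh hz]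
  exact M.barπ_smul_eq_zero (Nat.mul_pos (Nat.two_pow_pos k) ha)
    (sq0Iter_mem (M := V.toUnstable) k hh) _

/-- `(t_0, …, t_{r-1}) · M`; only its additive structure is needed. -/
def gensSpan (r : ℕ) : AddSubgroup M.E.carrier :=
  AddSubgroup.closure {x | ∃ l : Fin d, l.val < r ∧ ∃ z, x = V.gens l • z}

variable {M}

lemma gens_smul_mem_gensSpan {r : ℕ} {l : Fin d} (hl : l.val < r) (z : M.E.carrier) :
    V.gens l • z ∈ M.gensSpan r :=
  AddSubgroup.subset_closure ⟨l, hl, z, rfl⟩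

lemma gensSpan_zero : M.gensSpan 0 = ⊥ := by
  refine AddSubgroup.closure_eq_bot_iff.mpr ?_
  rintro _ ⟨l, hl, -⟩
  exact absurd hl (Nat.not_lt_zero _)

lemma map_mem_gensSpan {r : ℕ} (φ : M.E.carrier →+ M.E.carrier)
    (hφ : ∀ l : Fin d, l.val < r → ∀ z, φ (V.gens l • z) ∈ M.gensSpan r)
    {x : M.E.carrier} (hx : x ∈ M.gensSpan r) : φ x ∈ M.gensSpan r := by
  refine (AddSubgroup.closure_le (K := (M.gensSpan r).comap φ)).mpr ?_ hx
  rintro _ ⟨l, hl, z, rfl⟩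
  exact hφ l hl z

lemma gens_smul_mem {r : ℕ} (l : Fin d) {x : M.E.carrier} (hx : x ∈ M.gensSpan r) :
    V.gens l • x ∈ M.gensSpan r :=
  map_mem_gensSpan (DistribSMul.toAddMonoidHom _ (V.gens l))
    (fun l' hl' z => by
      simpa only [DistribSMul.toAddMonoidHom_apply, smul_smul, mul_comm (V.gens l)] using
        gens_smul_mem_gensSpan hl' (V.gens l • z)) hx

lemma sq_smul_mem {r : ℕ} (k : ℕ) {x : M.E.carrier} (hx : x ∈ M.gensSpan r) :
    Sq k • x ∈ M.gensSpan r := by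
  refine map_mem_gensSpan (DistribSMul.toAddMonoidHom _ (Sq k)) (fun l hl z => ?_) hx
  rw [DistribSMul.toAddMonoidHom_apply]
  cases k with
  | zero => rw [Sq_zero, one_smul]; exact gens_smul_mem_gensSpan hl z
  | succ j =>
    rw [M.sq_succ_gens_smul]
    exact add_mem (gens_smul_mem_gensSpan hl _) (gens_smul_mem _ (gens_smul_mem_gensSpan hl _))

lemma proj_mem_gensSpan {r : ℕ} (n : ℕ) {x : M.E.carrier} (hx : x ∈ M.gensSpan r) :
    M.E.proj n x ∈ M.gensSpan r := by
  refine map_mem_gensSpan _ (fun l hl z => ?_) hx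
  cases n with
  | zero => rw [M.proj_smul_of_lt zero_lt_one (V.gens_deg l)]; exact zero_mem _
  | succ n =>
    rw [add_comm, M.proj_smul_of_mem (V.gens_deg l)]
    exact gens_smul_mem_gensSpan hl _

lemma eq_zero_of_mem_gensSpan_of_mem_grading_zero {r : ℕ} {x : M.E.carrier}
    (hx : x ∈ M.gensSpan r) (hx₀ : x ∈ M.E.grading 0) : x = 0 := by
  have hle : M.gensSpan r ≤ (M.E.proj 0).ker := by
    refine (AddSubgroup.closure_le _).mpr ?_
    rintro _ ⟨l, -, z, rfl⟩
    exact M.proj_smul_of_lt zero_lt_one (V.gens_deg l) z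
  rw [← UnstableModule.proj_of_mem_same hx₀]
  exact hle hx

lemma exists_sub_gens_smul_mem {r : ℕ} (hr : r < d) {x : M.E.carrier}
    (hx : x ∈ M.gensSpan (r + 1)) : ∃ v, x - V.gens ⟨r, hr⟩ • v ∈ M.gensSpan r := by
  induction hx using AddSubgroup.closure_induction with
  | mem x hx =>
    obtain ⟨l, hl, z, rfl⟩ := hx
    rcases Nat.lt_succ_iff_lt_or_eq.mp hl with hl | hl
    · exact ⟨0, by simpa using gens_smul_mem_gensSpan hl z⟩
    · exact ⟨z, by simp [show l = ⟨r, hr⟩ from Fin.ext hl]⟩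
  | zero => exact ⟨0, by simp⟩
  | add x y _ _ hx hy =>
    obtain ⟨v, hv⟩ := hx
    obtain ⟨w, hw⟩ := hy
    exact ⟨v + w, by simpa only [smul_add, add_sub_add_comm] using add_mem hv hw⟩
  | neg x _ hx =>
    obtain ⟨v, hv⟩ := hx
    refine ⟨-v, ?_⟩
    rw [smul_neg, sub_neg_eq_add, neg_add_eq_sub, ← neg_sub]
    exact neg_mem hv

lemma exists_homogeneous_sub_gens_smul_mem {r : ℕ} (hr : r < d) {e : ℕ} {x : M.E.carrier}
    (hx : x ∈ M.gensSpan (r + 1)) (hxe : x ∈ M.E.grading (e + 1)) :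
    ∃ v ∈ M.E.grading e, x - V.gens ⟨r, hr⟩ • v ∈ M.gensSpan r := by
  obtain ⟨v, hv⟩ := exists_sub_gens_smul_mem hr hx
  refine ⟨M.E.proj e v, UnstableModule.proj_mem e v, ?_⟩
  rw [← M.proj_smul_of_mem (V.gens_deg _), add_comm 1 e, ← UnstableModule.proj_of_mem_same hxe,
    ← map_sub]
  exact proj_mem_gensSpan _ hv

lemma mem_gensSpan_of_barπ_eq_zero {x : M.E.carrier} (hx : M.barπ.toFun x = 0) :
    x ∈ M.gensSpan d := by
  refine Submodule.span_le (p := AddSubgroup.toZModSubmodule 2 (M.gensSpan d)) |>.mpr ?_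
    ((M.barπ_ker x).mp hx)
  rintro _ ⟨m, h, z, hm, hh, rfl⟩
  obtain ⟨c, rfl⟩ := Ideal.mem_span_range_iff_exists_fun.mp (V.mem_span_gens_of_mem_grading hm hh)
  rw [SetLike.mem_coe, AddSubgroup.mem_toZModSubmodule, Finset.sum_smul]
  refine sum_mem fun l _ => ?_
  rw [mul_comm, mul_smul]
  exact gens_smul_mem_gensSpan l.isLt _

end HVModule

namespace HVHom

variable {d : ℕ} {V : HVSetup d} {K F : HVModule V} (i : HVHom V K F)

lemma exists_gens_smul_sq_sub_mem {r : ℕ} (hr : r < d) {D : ℕ} {y : K.E.carrier}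
    (hy : y ∈ K.E.grading D) {v : F.E.carrier}
    (hv : i.toFun y - V.gens ⟨r, hr⟩ • v ∈ F.gensSpan r) (j : ℕ) :
    ∃ z ∈ K.E.grading (D + j), V.gens ⟨r, hr⟩ • (Sq j • v) - i.toFun z ∈ F.gensSpan r := by
  set t := V.gens ⟨r, hr⟩
  induction j with
  | zero => exact ⟨y, hy, by rw [Sq_zero, one_smul, ← neg_sub]; exact neg_mem hv⟩
  | succ j ih =>
    obtain ⟨z, hz, hq⟩ := ih
    have htz : t • z ∈ K.E.grading (D + (j + 1)) := by
      simpa only [add_comm 1, add_assoc] using K.smul_grading 1 _ _ _ (V.gens_deg _) hz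
    refine ⟨Sq (j + 1) • y - t • z, sub_mem (K.E.sq_mem _ _ _ hy) htz, ?_⟩
    have hsplit : t • (Sq (j + 1) • v) - i.toFun (Sq (j + 1) • y - t • z)
        = -(Sq (j + 1) • (i.toFun y - t • v)) - t • (t • (Sq j • v) - i.toFun z) := by
      rw [map_sub, i.map_hsmul, LinearMap.map_smul, smul_sub, smul_sub, F.sq_succ_gens_smul]
      abel
    rw [hsplit]
    exact sub_mem (neg_mem (HVModule.sq_smul_mem _ hv)) (HVModule.gens_smul_mem _ hq)

lemma exists_sq_sub_gens_smul_mem {r : ℕ} (hr : r < d) {e : ℕ} {y : K.E.carrier}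
    (hy : y ∈ K.E.grading (e + 1)) (hiy : i.toFun y ∈ F.gensSpan (r + 1)) :
    ∃ z ∈ K.E.grading (e + 1 + e),
      i.toFun (Sq (e + 1) • y - V.gens ⟨r, hr⟩ • z) ∈ F.gensSpan r := by
  set t := V.gens ⟨r, hr⟩
  obtain ⟨v, hv, hyv⟩ :=
    HVModule.exists_homogeneous_sub_gens_smul_mem hr hiy (i.map_grading _ _ hy)
  obtain ⟨z, hz, hq⟩ := i.exists_gens_smul_sq_sub_mem hr hy hyv e
  refine ⟨z, hz, ?_⟩
  have hsplit : i.toFun (Sq (e + 1) • y - t • z)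
      = Sq (e + 1) • (i.toFun y - t • v) + t • (t • (Sq e • v) - i.toFun z) := by
    rw [map_sub, i.map_hsmul, LinearMap.map_smul, smul_sub, smul_sub, F.sq_succ_gens_smul,
      F.E.instability _ e v hv (by omega), smul_zero, zero_add]
    abel
  rw [hsplit]
  exact add_mem (HVModule.sq_smul_mem _ hyv) (HVModule.gens_smul_mem _ hq)

lemma exists_barπ_sq0Iter_eq_zero (hi : Function.Injective i.toFun) {r : ℕ} (hr : r ≤ d)
    {D : ℕ} {y : K.E.carrier} (hy : y ∈ K.E.grading D) (hiy : i.toFun y ∈ F.gensSpan r) :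
    ∃ k, K.barπ.toFun (sq0Iter K.E k D y) = 0 := by
  have of_image_eq_zero : ∀ {D : ℕ} {y : K.E.carrier}, i.toFun y = 0 →
      ∃ k, K.barπ.toFun (sq0Iter K.E k D y) = 0 := fun hiy₀ =>
    ⟨0, by rw [hi (hiy₀.trans (map_zero _).symm)]; exact map_zero _⟩
  induction r generalizing D y with
  | zero =>
    rw [HVModule.gensSpan_zero, AddSubgroup.mem_bot] at hiy
    exact of_image_eq_zero hiy
  | succ r ih =>
    cases D with
    | zero =>
      exact of_image_eq_zero
        (HVModule.eq_zero_of_mem_gensSpan_of_mem_grading_zero hiy (i.map_grading _ _ hy))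
    | succ e =>
      have hrd : r < d := hr
      obtain ⟨z, hz, hiy'⟩ := i.exists_sq_sub_gens_smul_mem hrd hy hiy
      set t := V.gens ⟨r, hrd⟩
      have htz : t • z ∈ K.E.grading (1 + (e + 1 + e)) := K.smul_grading _ _ _ _ (V.gens_deg _) hz
      have hy' : Sq (e + 1) • y - t • z ∈ K.E.grading (2 * (e + 1)) :=
        sub_mem (by simpa only [two_mul] using K.E.sq_mem _ _ _ hy) (by convert htz using 2; ring)
      obtain ⟨k, hk⟩ := ih hrd.le hy' hiy'
      refine ⟨k + 1, ?_⟩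
      rw [sq0Iter_succ', ← sub_add_cancel (Sq (e + 1) • y) (t • z),
        sq0Iter_add, map_add, hk, zero_add, show 2 * (e + 1) = 1 + (e + 1 + e) by ring]
      exact K.barπ_sq0Iter_smul_eq_zero le_rfl (V.gens_deg _) hz k

end HVHom

theorem tor_one_is_nilpotent_general {d : ℕ} (V : HVSetup d) (K F : HVModule V)
    (i : HVHom V K F) (hi : Function.Injective i.toFun)
    (ibar : UnstableHom K.bar F.bar)
    (hibar : ∀ x, ibar.toFun (K.barπ.toFun x) = F.barπ.toFun (i.toFun x)) :
    ∀ (n : ℕ) (x : K.bar.carrier), x ∈ K.bar.grading n → ibar.toFun x = 0 →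
      ∃ k, sq0Iter K.bar k n x = 0 := by
  intro n x hx hix
  obtain ⟨y, rfl⟩ := K.barπ_surj x
  have hy : K.barπ.toFun (K.E.proj n y) = K.barπ.toFun y := by
    rw [K.barπ.map_proj, UnstableModule.proj_of_mem_same hx]
  have hiy : F.barπ.toFun (i.toFun (K.E.proj n y)) = 0 := by rw [← hibar, hy, hix]
  obtain ⟨k, hk⟩ := i.exists_barπ_sq0Iter_eq_zero hi le_rfl (UnstableModule.proj_mem n y)
    (HVModule.mem_gensSpan_of_barπ_eq_zero hiy)
  exact ⟨k, by rw [← hy, ← K.barπ.map_sq0Iter, hk]⟩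

/-- Proposition 2.1.1.  For every unstable `H^*V`-`A`-module `N`, the
unstable `A`-module `Tor₁^{H^*V}(F_2, N)` is nilpotent.  Here `Tor₁^{H^*V}(F_2, N)` is
computed, as usual, from any presentation `0 → K → F → N → 0` with `F` a free
`H^*V`-module: it is the kernel of the induced map `K̄ → F̄` of the quotients
`(-) ⊗_{H^*V} F_2`.  The statement says that every homogeneous element of this kernel
is killed by some iterate of `Sq₀`. -/
theorem tor_one_is_nilpotent {d : ℕ} (V : HVSetup d) (N K F : HVModule V)
    (i : HVHom V K F) (p : HVHom V F N)
    (hi : Function.Injective i.toFun) (hp : Function.Surjective p.toFun)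
    (hexact : ∀ x, p.toFun x = 0 ↔ x ∈ Set.range i.toFun)
    (hfree : Module.Free V.H F.E.carrier)
    (ibar : UnstableHom K.bar F.bar)
    (hibar : ∀ x, ibar.toFun (K.barπ.toFun x) = F.barπ.toFun (i.toFun x)) :
    ∀ (n : ℕ) (x : K.bar.carrier), x ∈ K.bar.grading n → ibar.toFun x = 0 →
      ∃ k, sq0Iter K.bar k n x = 0 :=
  tor_one_is_nilpotent_general V K F i hi ibar hibar
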